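/- The number of Latin squares of order n satisfies L(n) ≤ 2^{(n-1)^2} · n^{lcs(n)}, where lcs(n) is the maximum size of a critical set in any Latin square of order n. -/

import Mathlib

open Real

def IsLatinSquare {n : ℕ} (L : Fin n → Fin n → Fin n) : Prop :=
  (∀ i, Function.Bijective (L i)) ∧ (∀ j, Function.Bijective fun i => L i j)

def IsPartialLatinSquare {n : ℕ} (P : Fin n → Fin n → Option (Fin n)) : Prop :=
  (∀ i j j' k, P i j = some k → P i j' = some k → j = j') ∧
  (∀ i i' j k, P i j = some k → P i' j = some k → i = i')

def ExtendsPLS {n : ℕ} (L : Fin n → Fin n → Fin n) (P : Fin n → Fin n → Option (Fin n)) : Prop :=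
  ∀ i j k, P i j = some k → L i j = k

def UniquelyCompletableTo {n : ℕ} (P : Fin n → Fin n → Option (Fin n))
    (L : Fin n → Fin n → Fin n) : Prop :=
  IsLatinSquare L ∧ ExtendsPLS L P ∧ ∀ L', IsLatinSquare L' → ExtendsPLS L' P → L' = L

def SubPLS {n : ℕ} (Q P : Fin n → Fin n → Option (Fin n)) : Prop :=
  ∀ i j k, Q i j = some k → P i j = some k

def IsCriticalSet {n : ℕ} (C : Fin n → Fin n → Option (Fin n))
    (L : Fin n → Fin n → Fin n) : Prop :=
  IsPartialLatinSquare C ∧ UniquelyCompletableTo C L ∧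
  ∀ Q, SubPLS Q C → Q ≠ C → ¬ UniquelyCompletableTo Q L

def plsSize {n : ℕ} (P : Fin n → Fin n → Option (Fin n)) : ℕ :=
  (Finset.univ.filter fun p : Fin n × Fin n => (P p.1 p.2).isSome).card

noncomputable def numLatin (n : ℕ) : ℕ := Nat.card {L : Fin n → Fin n → Fin n // IsLatinSquare L}

noncomputable def lcs (n : ℕ) : ℕ :=
  sSup {m | ∃ (L : Fin n → Fin n → Fin n) (C : Fin n → Fin n → Option (Fin n)),
    IsLatinSquare L ∧ IsCriticalSet C L ∧ plsSize C = m}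

/-!
Every Latin square `L` of order `n = k + 1` is uniquely determined by its cells outside the first
row and column (each row, and then each column, misses a single entry), so this partial square
contains a critical set `C` of `L`. Distinct Latin squares have distinct critical sets, and `C` is
described by its shape, a subset of the `k × k` lower-right block, together with at most `lcs n`
entries listed in a fixed order of that shape.
-/

open Finset Function

section OptionFun

variable {α β : Type*}

/-- The entries of `f` on `S`, listed along `S.equivFin` and padded with `b₀`. -/
noncomputable def valueCode (m : ℕ) (b₀ : β) (S : Finset α) (f : α → Option β) : Fin m → β :=
  fun i => if h : i.val < #S then (f (S.equivFin.symm ⟨i, h⟩)).getD b₀ else b₀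

lemma valueCode_equivFin {m : ℕ} {b₀ : β} {S : Finset α} (hS : #S ≤ m) (f : α → Option β)
    (a : S) :
    valueCode m b₀ S f ⟨S.equivFin a, (S.equivFin a).isLt.trans_le hS⟩ = (f a).getD b₀ := by
  simp [valueCode]

variable [Fintype α]

def optSupport (f : α → Option β) : Finset α :=
  univ.filter fun a => (f a).isSome

lemma mem_optSupport {f : α → Option β} {a : α} : a ∈ optSupport f ↔ (f a).isSome := by
  simp [optSupport]

lemma eq_of_optSupport_eq_of_valueCode_eq {m : ℕ} {b₀ : β} {f g : α → Option β}
    (hm : #(optSupport f) ≤ m) (hS : optSupport f = optSupport g)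
    (hv : valueCode m b₀ (optSupport f) f = valueCode m b₀ (optSupport f) g) : f = g := by
  funext a
  by_cases ha : a ∈ optSupport f
  · obtain ⟨x, hx⟩ := Option.isSome_iff_exists.mp (mem_optSupport.mp ha)
    obtain ⟨y, hy⟩ := Option.isSome_iff_exists.mp (mem_optSupport.mp (hS ▸ ha))
    have hxy := congrFun hv ⟨_, ((optSupport f).equivFin ⟨a, ha⟩).isLt.trans_le hm⟩
    rw [valueCode_equivFin hm f ⟨a, ha⟩, valueCode_equivFin hm g ⟨a, ha⟩] at hxy
    simp only [hx, hy, Option.getD_some] at hxy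
    rw [hx, hy, hxy]
  · have hb : a ∉ optSupport g := hS ▸ ha
    simp only [mem_optSupport, Bool.not_eq_true, Option.isSome_eq_false_iff,
      Option.isNone_iff_eq_none] at ha hb
    rw [ha, hb]

theorem natCard_optSupport_le [DecidableEq α] [Fintype β] [Nonempty β] (R : Finset α) (m : ℕ) :
    Nat.card {f : α → Option β // optSupport f ⊆ R ∧ #(optSupport f) ≤ m} ≤
      2 ^ #R * Fintype.card β ^ m := by
  let b₀ : β := Classical.arbitrary β
  let code : {f : α → Option β // optSupport f ⊆ R ∧ #(optSupport f) ≤ m} →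
      R.powerset × (Fin m → β) := fun f =>
    (⟨optSupport f.1, mem_powerset.mpr f.2.1⟩, valueCode m b₀ (optSupport f.1) f.1)
  have hcode : Injective code := by
    intro f g hfg
    obtain ⟨hR, hv⟩ := Prod.ext_iff.mp hfg
    have hS : optSupport f.1 = optSupport g.1 := congrArg Subtype.val hR
    simp only [code, ← hS] at hv
    exact Subtype.ext (eq_of_optSupport_eq_of_valueCode_eq f.2.2 hS hv)
  calc _ ≤ Nat.card (R.powerset × (Fin m → β)) := Nat.card_le_card_of_injective code hcode
    _ = 2 ^ #R * Fintype.card β ^ m := by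
      rw [Nat.card_prod, Nat.card_eq_finsetCard, card_powerset]
      simp [Nat.card_eq_fintype_card]

end OptionFun

lemma eq_of_eq_off_point {α β : Type*} {f g : α → β} (hf : Injective f) (hg : Surjective g)
    (a : α) (h : ∀ x, x ≠ a → f x = g x) : f = g := by
  funext x
  by_cases hx : x = a
  · subst hx
    obtain ⟨y, hy⟩ := hg (f x)
    by_cases hyx : y = x
    · rw [← hy, hyx]
    · exact absurd (hf ((h y hyx).trans hy)) hyx
  · exact h x hx

section PartialLatinSquare

variable {n : ℕ} {L L₁ L₂ : Fin n → Fin n → Fin n} {C P Q : Fin n → Fin n → Option (Fin n)}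

lemma SubPLS.trans (hQP : SubPLS Q P) (hPC : SubPLS P C) : SubPLS Q C :=
  fun i j k h => hPC i j k (hQP i j k h)

lemma plsSize_eq_card_optSupport (P : Fin n → Fin n → Option (Fin n)) :
    plsSize P = #(optSupport (uncurry P)) :=
  rfl

lemma SubPLS.optSupport_subset (h : SubPLS Q P) :
    optSupport (uncurry Q) ⊆ optSupport (uncurry P) := by
  intro p hp
  obtain ⟨k, hk⟩ := Option.isSome_iff_exists.mp (mem_optSupport.mp hp)
  exact mem_optSupport.mpr (by simp [uncurry, h p.1 p.2 k hk])

lemma SubPLS.eq_of_optSupport_eq (h : SubPLS Q P)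
    (hS : optSupport (uncurry Q) = optSupport (uncurry P)) : Q = P := by
  funext i j
  cases hQ : Q i j with
  | some k => exact (h i j k hQ).symm
  | none =>
    have hnot : (i, j) ∉ optSupport (uncurry P) := by
      rw [← hS, mem_optSupport]
      simp [uncurry, hQ]
    exact (by simpa [mem_optSupport, uncurry] using hnot : P i j = none).symm

lemma SubPLS.plsSize_lt (h : SubPLS Q P) (hne : Q ≠ P) : plsSize Q < plsSize P :=
  card_lt_card (ssubset_of_subset_of_ne h.optSupport_subset (mt h.eq_of_optSupport_eq hne))

lemma UniquelyCompletableTo.isPartialLatinSquare (h : UniquelyCompletableTo P L) :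
    IsPartialLatinSquare P := by
  obtain ⟨hL, hext, -⟩ := h
  exact ⟨fun i j j' k hj hj' => (hL.1 i).1 ((hext i j k hj).trans (hext i j' k hj').symm),
    fun i i' j k hi hi' => (hL.2 j).1 ((hext i j k hi).trans (hext i' j k hi').symm)⟩

lemma UniquelyCompletableTo.eq (h₁ : UniquelyCompletableTo P L₁)
    (h₂ : UniquelyCompletableTo P L₂) : L₁ = L₂ :=
  h₂.2.2 L₁ h₁.1 h₁.2.1

lemma UniquelyCompletableTo.exists_isCriticalSet (h : UniquelyCompletableTo P L) :
    ∃ C, SubPLS C P ∧ IsCriticalSet C L := by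
  obtain ⟨C, ⟨hCP, hC⟩, hmin⟩ := Set.exists_min_image {Q | SubPLS Q P ∧ UniquelyCompletableTo Q L}
    plsSize (Set.toFinite _) ⟨P, fun _ _ _ h => h, h⟩
  refine ⟨C, hCP, hC.isPartialLatinSquare, hC, fun Q hQC hne hQ => ?_⟩
  exact (hmin Q ⟨hQC.trans hCP, hQ⟩).not_gt (hQC.plsSize_lt hne)

lemma IsCriticalSet.plsSize_le_lcs (hC : IsCriticalSet C L) : plsSize C ≤ lcs n := by
  refine le_csSup ⟨Fintype.card (Fin n × Fin n), ?_⟩ ⟨L, C, hC.2.1.1, hC, rfl⟩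
  rintro m ⟨-, C', -, -, rfl⟩
  exact card_le_univ _

end PartialLatinSquare

lemma lcs_zero : lcs 0 = 0 :=
  Nat.le_zero.mp <| csSup_le' fun _ ⟨_, C, _, _, hC⟩ => hC ▸ (card_le_univ _).trans (by simp)

lemma numLatin_zero : numLatin 0 = 1 :=
  Nat.card_eq_one_iff_unique.mpr ⟨⟨fun _ _ => Subtype.ext (funext (·.elim0))⟩,
    ⟨⟨(·.elim0), (·.elim0), (·.elim0)⟩⟩⟩

section FirstRowCol

variable {k : ℕ}

def withoutFirstRowCol (L : Fin (k + 1) → Fin (k + 1) → Fin (k + 1)) :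
    Fin (k + 1) → Fin (k + 1) → Option (Fin (k + 1)) :=
  fun i j => if i = 0 ∨ j = 0 then none else some (L i j)

def innerCells (k : ℕ) : Finset (Fin (k + 1) × Fin (k + 1)) :=
  (univ.erase 0) ×ˢ (univ.erase 0)

lemma card_innerCells : #(innerCells k) = k ^ 2 := by
  simp [innerCells, card_erase_of_mem, sq]

lemma optSupport_withoutFirstRowCol (L : Fin (k + 1) → Fin (k + 1) → Fin (k + 1)) :
    optSupport (uncurry (withoutFirstRowCol L)) = innerCells k := by
  ext ⟨i, j⟩
  simp [mem_optSupport, withoutFirstRowCol, innerCells, apply_ite]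

lemma uniquelyCompletableTo_withoutFirstRowCol {L : Fin (k + 1) → Fin (k + 1) → Fin (k + 1)}
    (hL : IsLatinSquare L) : UniquelyCompletableTo (withoutFirstRowCol L) L := by
  refine ⟨hL, fun i j c h => ?_, fun L' hL' hext => ?_⟩
  · unfold withoutFirstRowCol at h
    split_ifs at h
    exact Option.some_injective _ h
  · have hext' : ∀ i j, i ≠ 0 → j ≠ 0 → L' i j = L i j := fun i j hi hj =>
      hext i j _ (by simp [withoutFirstRowCol, hi, hj])
    have hrow : ∀ i, i ≠ 0 → L' i = L i := fun i hi =>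
      eq_of_eq_off_point (hL'.1 i).1 (hL.1 i).2 0 fun j hj => hext' i j hi hj
    funext i j
    exact congrFun (eq_of_eq_off_point (hL'.2 j).1 (hL.2 j).2 0 fun i hi =>
      congrFun (hrow i hi) j) i

end FirstRowCol

theorem stmt3 (n : ℕ) :
    numLatin n ≤ 2 ^ ((n - 1) ^ 2) * n ^ (lcs n) := by
  rcases n with _ | k
  · simp [numLatin_zero, lcs_zero]
  choose C hsub hcrit using fun L : {L // IsLatinSquare L} =>
    (uniquelyCompletableTo_withoutFirstRowCol L.2).exists_isCriticalSet
  let code (L : {L // IsLatinSquare L}) :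
      {f : Fin (k + 1) × Fin (k + 1) → Option (Fin (k + 1)) //
        optSupport f ⊆ innerCells k ∧ #(optSupport f) ≤ lcs (k + 1)} :=
    ⟨uncurry (C L), optSupport_withoutFirstRowCol L.1 ▸ (hsub L).optSupport_subset,
      (hcrit L).plsSize_le_lcs⟩
  have hcode : Injective code := fun L₁ L₂ h => by
    have hC : C L₁ = C L₂ := uncurry_injective (congrArg Subtype.val h)
    exact Subtype.ext ((hcrit L₁).2.1.eq (hC ▸ (hcrit L₂).2.1))
  calc numLatin (k + 1) ≤ _ := Nat.card_le_card_of_injective code hcode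
    _ ≤ 2 ^ #(innerCells k) * Fintype.card (Fin (k + 1)) ^ lcs (k + 1) :=
      natCard_optSupport_le _ _
    _ = 2 ^ ((k + 1 - 1) ^ 2) * (k + 1) ^ lcs (k + 1) := by simp [card_innerCells]
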